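/- Under the hypotheses of the previous statement, if in addition there is a smooth function h on L with dh = f_L^*(e^t(dz − ∑_{i=1}^n y_i dx_i)), then the function H on L × S^m defined by H(p,u) = h(p) satisfies dH = F^*(e^t(dz − ∑_{i=−m+1}^n ỹ_i dx̃_i)); i.e., exactness of the Lagrangian cobordism is preserved by S^m-spinning. -/

import Mathlib

/-- The `j`-th coordinate projection on `ℝ × ℝ^N` (onto the second factor's coordinates),
as a continuous linear functional. -/
noncomputable def coordProj (N : ℕ) (j : Fin N) : (ℝ × (Fin N → ℝ)) →L[ℝ] ℝ :=
  (ContinuousLinearMap.proj j).comp (ContinuousLinearMap.snd ℝ ℝ (Fin N → ℝ))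

/-- The `t`-coordinate on `ℝ × ℝ^N`. -/
noncomputable def tProj (N : ℕ) : (ℝ × (Fin N → ℝ)) →L[ℝ] ℝ :=
  ContinuousLinearMap.fst ℝ ℝ (Fin N → ℝ)

/-- The 1-form `e^t (dz − ∑_{i=1}^n y_i dx_i)` on the symplectization
`ℝ × ℝ^{2n+1}`, in coordinates where `x_i` sits at index `2i`, `y_i` at index `2i+1`
(for `0 ≤ i < n`) and `z` at index `2n`; its differential is the symplectic form. -/
noncomputable def symplPrimitive (n : ℕ) (q : ℝ × (Fin (2 * n + 1) → ℝ)) :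
    (ℝ × (Fin (2 * n + 1) → ℝ)) →L[ℝ] ℝ :=
  Real.exp q.1 •
    (coordProj (2 * n + 1) ⟨2 * n, by omega⟩ -
      ∑ i : Fin n, q.2 ⟨2 * (i : ℕ) + 1, by have := i.isLt; omega⟩ •
        coordProj (2 * n + 1) ⟨2 * (i : ℕ), by have := i.isLt; omega⟩)

/-- The pullback of a 1-form `ω` on `ℝ × ℝ^N` along a map `f : P → ℝ × ℝ^N`. -/
noncomputable def pullbackOneForm {P : Type} [NormedAddCommGroup P] [NormedSpace ℝ P]
    {N : ℕ} (f : P → ℝ × (Fin N → ℝ))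
    (ω : (ℝ × (Fin N → ℝ)) → (ℝ × (Fin N → ℝ)) →L[ℝ] ℝ) (p : P) : P →L[ℝ] ℝ :=
  (ω (f p)).comp (fderiv ℝ f p)

/-- A 1-form `λ` on a normed space has vanishing exterior derivative:
`dλ(v, w) = D_v(λ(w)) − D_w(λ(v)) = 0` for all constant vector fields `v`, `w`. -/
def HasZeroExtDeriv {P : Type} [NormedAddCommGroup P] [NormedSpace ℝ P]
    (lam : P → P →L[ℝ] ℝ) : Prop :=
  ∀ p v w, fderiv ℝ (fun q => lam q w) p v = fderiv ℝ (fun q => lam q v) p w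

/-- The spun parameterization `F(p, u)` of `Σ_{S^m}L`: the `t`- and `x₂, y₂, …, z`-
coordinates of `f` are kept, while `(x₁, y₁)` is replaced by the `m+1` pairs
`(x₁ c_k, y₁ c_k)`. -/
noncomputable def spunCobordismMap (n m : ℕ) (hn : 1 ≤ n) {P Q : Type}
    (f : P → ℝ × (Fin (2 * n + 1) → ℝ)) (c : Q → Fin (m + 1) → ℝ) (pq : P × Q) :
    ℝ × (Fin (2 * (n + m) + 1) → ℝ) :=
  ((f pq.1).1, fun i =>
    if h : (i : ℕ) < 2 * (m + 1) then
      (if (i : ℕ) % 2 = 0 then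
        (f pq.1).2 ⟨0, by omega⟩ * c pq.2 ⟨(i : ℕ) / 2, by omega⟩
      else
        (f pq.1).2 ⟨1, by omega⟩ * c pq.2 ⟨(i : ℕ) / 2, by omega⟩)
    else (f pq.1).2 ⟨(i : ℕ) - 2 * m, by have := i.isLt; omega⟩)

section Helpers

variable {P Q : Type} [NormedAddCommGroup P] [NormedSpace ℝ P]
  [NormedAddCommGroup Q] [NormedSpace ℝ Q]

lemma fderiv_comp_fst' (g : P → ℝ) {p : P} (q : Q) (hg : DifferentiableAt ℝ g p) :
    fderiv ℝ (fun x : P × Q => g x.1) (p, q) =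
      (fderiv ℝ g p).comp (ContinuousLinearMap.fst ℝ P Q) := by
  have h1 : (fun x : P × Q => g x.1) = g ∘ Prod.fst := rfl
  rw [h1, fderiv_comp _ hg differentiableAt_fst, fderiv_fst]

lemma fderiv_comp_fst_apply (g : P → ℝ) {p : P} (q : Q) (hg : DifferentiableAt ℝ g p)
    (v : P) (w : Q) :
    fderiv ℝ (fun x : P × Q => g x.1) (p, q) (v, w) = fderiv ℝ g p v := by
  rw [fderiv_comp_fst' g q hg]; rfl

lemma fderiv_comp_snd' (g : Q → ℝ) (p : P) {q : Q} (hg : DifferentiableAt ℝ g q) :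
    fderiv ℝ (fun x : P × Q => g x.2) (p, q) =
      (fderiv ℝ g q).comp (ContinuousLinearMap.snd ℝ P Q) := by
  have h1 : (fun x : P × Q => g x.2) = g ∘ Prod.snd := rfl
  rw [h1, fderiv_comp _ hg differentiableAt_snd, fderiv_snd]

lemma fderiv_mul_fst_snd (g : P → ℝ) (k : Q → ℝ) {p : P} {q : Q}
    (hg : DifferentiableAt ℝ g p) (hk : DifferentiableAt ℝ k q) (v : P) (w : Q) :
    fderiv ℝ (fun x : P × Q => g x.1 * k x.2) (p, q) (v, w) =
      fderiv ℝ g p v * k q + g p * fderiv ℝ k q w := by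
  have hg' : DifferentiableAt ℝ (fun x : P × Q => g x.1) (p, q) :=
    hg.comp (p, q) differentiableAt_fst
  have hk' : DifferentiableAt ℝ (fun x : P × Q => k x.2) (p, q) :=
    hk.comp (p, q) differentiableAt_snd
  rw [fderiv_fun_mul hg' hk']
  simp only [ContinuousLinearMap.add_apply, ContinuousLinearMap.smul_apply, smul_eq_mul,
    fderiv_comp_fst' g q hg, fderiv_comp_snd' k p hk, ContinuousLinearMap.comp_apply,
    ContinuousLinearMap.coe_fst', ContinuousLinearMap.coe_snd']
  ring

lemma fderiv_pi_comp' {X : Type} [NormedAddCommGroup X] [NormedSpace ℝ X] {N : ℕ}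
    (g : X → ℝ × (Fin N → ℝ)) {x : X} (hg : DifferentiableAt ℝ g x) (j : Fin N) (v : X) :
    fderiv ℝ (fun x => (g x).2 j) x v = (fderiv ℝ g x v).2 j := by
  have h1 : (fun x => (g x).2 j) =
      (((ContinuousLinearMap.proj j).comp (ContinuousLinearMap.snd ℝ ℝ (Fin N → ℝ))
        : (ℝ × (Fin N → ℝ)) →L[ℝ] ℝ)) ∘ g := rfl
  rw [h1, fderiv_comp x (ContinuousLinearMap.differentiableAt _) hg,
    ContinuousLinearMap.fderiv]
  rfl

lemma fderiv_projc' {X : Type} [NormedAddCommGroup X] [NormedSpace ℝ X] {M : ℕ}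
    (g : X → Fin M → ℝ) {x : X} (hg : DifferentiableAt ℝ g x) (k : Fin M) (v : X) :
    fderiv ℝ (fun x => g x k) x v = (fderiv ℝ g x v) k := by
  have h1 : (fun x => g x k) =
      ((ContinuousLinearMap.proj k : (Fin M → ℝ) →L[ℝ] ℝ)) ∘ g := rfl
  rw [h1, fderiv_comp x (ContinuousLinearMap.differentiableAt _) hg,
    ContinuousLinearMap.fderiv]
  rfl

lemma cderiv_sum_zero {M : ℕ}
    (c : Q → Fin M → ℝ) (hc : Differentiable ℝ c)
    (hcsum : ∀ q, ∑ k, (c q k) ^ 2 = 1) (q w : Q) :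
    ∑ k : Fin M, c q k * (fderiv ℝ c q w) k = 0 := by
  have hck : ∀ k : Fin M, DifferentiableAt ℝ (fun q => c q k) q := fun k =>
    (ContinuousLinearMap.proj k : (Fin M → ℝ) →L[ℝ] ℝ).differentiableAt.comp q (hc q)
  have h1 : (fun q => ∑ k : Fin M, (c q k) ^ 2) = fun _ => (1 : ℝ) := funext hcsum
  have h2 : fderiv ℝ (fun q => ∑ k : Fin M, (c q k) ^ 2) q w = 0 := by
    rw [h1, fderiv_fun_const]; simp
  have h3 : fderiv ℝ (fun q => ∑ k : Fin M, (c q k) ^ 2) q w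
      = ∑ k : Fin M, 2 * (c q k * (fderiv ℝ c q w) k) := by
    rw [fderiv_fun_sum (A := fun k q => c q k ^ 2) (fun k _ => (hck k).pow 2),
      ContinuousLinearMap.sum_apply]
    refine Finset.sum_congr rfl fun k _ => ?_
    have e : (fun q => (c q k) ^ 2) = fun q => c q k * c q k := by funext q'; ring
    rw [e, fderiv_fun_mul (hck k) (hck k)]
    simp only [ContinuousLinearMap.add_apply, ContinuousLinearMap.smul_apply, smul_eq_mul]
    rw [fderiv_projc' c (hc q) k w]
    ring
  rw [h2, ← Finset.mul_sum] at h3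
  linarith

end Helpers

/-- Exactness is preserved by `S^m`-spinning: if `h : P → ℝ` is a primitive of the
pullback of `e^t(dz − ∑ y_i dx_i)` along `f_L`, then `H(p, u) := h(p)` is a primitive of
the pullback of `e^t(dz − ∑ ỹ_i dx̃_i)` along the spun parameterization `F`. -/
theorem spun_cobordism_exact (n m : ℕ) (hn : 1 ≤ n) (hm : 1 ≤ m)
    {P Q : Type} [NormedAddCommGroup P] [NormedSpace ℝ P]
    [NormedAddCommGroup Q] [NormedSpace ℝ Q]
    (f : P → ℝ × (Fin (2 * n + 1) → ℝ)) (hf : ContDiff ℝ (⊤ : ℕ∞) f)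
    (hinj : Function.Injective f)
    (hx : ∀ p, 0 < (f p).2 ⟨0, by omega⟩)
    (c : Q → Fin (m + 1) → ℝ) (hc : ContDiff ℝ (⊤ : ℕ∞) c)
    (hcsum : ∀ q, ∑ k, (c q k) ^ 2 = 1)
    (h : P → ℝ) (hh : ∀ p, fderiv ℝ h p = pullbackOneForm f (symplPrimitive n) p) :
    ∀ pq : P × Q,
      fderiv ℝ (fun pq' : P × Q => h pq'.1) pq
        = pullbackOneForm (spunCobordismMap n m hn f c) (symplPrimitive (n + m)) pq := by
  intro pq
  obtain ⟨p, q⟩ := pq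
  have hfd : Differentiable ℝ f := hf.differentiable (by simp)
  have hcd : Differentiable ℝ c := hc.differentiable (by simp)
  have hfc : ∀ (a : Fin (2 * n + 1)) (p' : P),
      DifferentiableAt ℝ (fun p => (f p).2 a) p' := fun a p' =>
    (((ContinuousLinearMap.proj a).comp (ContinuousLinearMap.snd ℝ ℝ (Fin (2 * n + 1) → ℝ))
      : (ℝ × (Fin (2 * n + 1) → ℝ)) →L[ℝ] ℝ)).differentiableAt.comp p' (hfd p')
  have hcc : ∀ (k : Fin (m + 1)) (q' : Q),
      DifferentiableAt ℝ (fun q => c q k) q' := fun k q' =>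
    (ContinuousLinearMap.proj k : (Fin (m + 1) → ℝ) →L[ℝ] ℝ).differentiableAt.comp q' (hcd q')
  set F := spunCobordismMap n m hn f c with hFdef
  -- differentiability of F
  have hFd : DifferentiableAt ℝ F (p, q) := by
    rw [hFdef]
    unfold spunCobordismMap
    apply DifferentiableAt.prodMk
    · exact (((hfd p).fst).comp (p, q) (differentiableAt_fst : DifferentiableAt ℝ (Prod.fst : P × Q → P) (p, q)) :)
    · rw [differentiableAt_pi]
      intro i
      by_cases hi : (i : ℕ) < 2 * (m + 1)
      · by_cases hpar : (i : ℕ) % 2 = 0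
        · simp only [dif_pos hi, if_pos hpar]
          exact (((hfc _ p).comp (p, q) (differentiableAt_fst : DifferentiableAt ℝ (Prod.fst : P × Q → P) (p, q))).mul
            ((hcc _ q).comp (p, q) (differentiableAt_snd : DifferentiableAt ℝ (Prod.snd : P × Q → Q) (p, q))) :)
        · simp only [dif_pos hi, if_neg hpar]
          exact (((hfc _ p).comp (p, q) (differentiableAt_fst : DifferentiableAt ℝ (Prod.fst : P × Q → P) (p, q))).mul
            ((hcc _ q).comp (p, q) (differentiableAt_snd : DifferentiableAt ℝ (Prod.snd : P × Q → Q) (p, q))) :)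
      · simp only [dif_neg hi]
        exact ((hfc _ p).comp (p, q) (differentiableAt_fst : DifferentiableAt ℝ (Prod.fst : P × Q → P) (p, q)) :)
  -- component formulas
  have hco_even : ∀ (k : ℕ) (hk : k < m + 1) (h2 : 2 * k < 2 * (n + m) + 1),
      (fun x : P × Q => (F x).2 ⟨2 * k, h2⟩)
        = fun x => (f x.1).2 ⟨0, by omega⟩ * c x.2 ⟨k, hk⟩ := by
    intro k hk h2
    funext x
    rw [hFdef]
    show (if h : 2 * k < 2 * (m + 1) then
      (if 2 * k % 2 = 0 then
        (f x.1).2 ⟨0, by omega⟩ * c x.2 ⟨2 * k / 2, by omega⟩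
      else
        (f x.1).2 ⟨1, by omega⟩ * c x.2 ⟨2 * k / 2, by omega⟩)
      else (f x.1).2 ⟨2 * k - 2 * m, by omega⟩) = _
    rw [dif_pos (by omega : 2 * k < 2 * (m + 1)), if_pos (by omega : 2 * k % 2 = 0)]
    exact congrArg _ (congrArg (c x.2) (Fin.ext (show 2 * k / 2 = k by omega)))
  have hco_odd : ∀ (k : ℕ) (hk : k < m + 1) (h2 : 2 * k + 1 < 2 * (n + m) + 1),
      (fun x : P × Q => (F x).2 ⟨2 * k + 1, h2⟩)
        = fun x => (f x.1).2 ⟨1, by omega⟩ * c x.2 ⟨k, hk⟩ := by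
    intro k hk h2
    funext x
    rw [hFdef]
    show (if h : 2 * k + 1 < 2 * (m + 1) then
      (if (2 * k + 1) % 2 = 0 then
        (f x.1).2 ⟨0, by omega⟩ * c x.2 ⟨(2 * k + 1) / 2, by omega⟩
      else
        (f x.1).2 ⟨1, by omega⟩ * c x.2 ⟨(2 * k + 1) / 2, by omega⟩)
      else (f x.1).2 ⟨2 * k + 1 - 2 * m, by omega⟩) = _
    rw [dif_pos (by omega : 2 * k + 1 < 2 * (m + 1)),
      if_neg (by omega : ¬ (2 * k + 1) % 2 = 0)]
    exact congrArg _ (congrArg (c x.2) (Fin.ext (show (2 * k + 1) / 2 = k by omega)))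
  have hco_tail : ∀ (a b : ℕ) (ha : 2 * (m + 1) ≤ a) (ha2 : a < 2 * (n + m) + 1)
      (hb : b < 2 * n + 1) (hab : a = b + 2 * m),
      (fun x : P × Q => (F x).2 ⟨a, ha2⟩) = fun x => (f x.1).2 ⟨b, hb⟩ := by
    intro a b ha ha2 hb hab
    funext x
    rw [hFdef]
    show (if h : a < 2 * (m + 1) then
      (if a % 2 = 0 then
        (f x.1).2 ⟨0, by omega⟩ * c x.2 ⟨a / 2, by omega⟩
      else
        (f x.1).2 ⟨1, by omega⟩ * c x.2 ⟨a / 2, by omega⟩)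
      else (f x.1).2 ⟨a - 2 * m, by omega⟩) = _
    rw [dif_neg (by omega : ¬ a < 2 * (m + 1))]
    exact congrArg ((f x.1).2) (Fin.ext (show a - 2 * m = b by omega))
  -- the key identity of 1-forms
  have key : pullbackOneForm F (symplPrimitive (n + m)) (p, q)
      = (pullbackOneForm f (symplPrimitive n) p).comp (ContinuousLinearMap.fst ℝ P Q) := by
    refine ContinuousLinearMap.ext fun vw => ?_
    obtain ⟨v, w⟩ := vw
    simp only [pullbackOneForm, symplPrimitive, coordProj, ContinuousLinearMap.comp_apply,
      ContinuousLinearMap.smul_apply, smul_eq_mul, ContinuousLinearMap.sub_apply,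
      ContinuousLinearMap.sum_apply, ContinuousLinearMap.coe_fst', ContinuousLinearMap.coe_snd',
      ContinuousLinearMap.proj_apply]
    have hDz : (fderiv ℝ F (p, q) (v, w)).2 ⟨2 * (n + m), by omega⟩
        = (fderiv ℝ f p v).2 ⟨2 * n, by omega⟩ := by
      rw [← fderiv_pi_comp' F hFd ⟨2 * (n + m), by omega⟩ (v, w),
        hco_tail (2 * (n + m)) (2 * n) (by omega) (by omega) (by omega) (by omega),
        fderiv_comp_fst_apply _ q (hfc _ p) v w,
        fderiv_pi_comp' f (hfd p) _ v]
    -- the sum identity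
    set T : ℕ → ℝ := fun k =>
      if hk : k < m + 1 then
        ((f p).2 ⟨1, by omega⟩ * c q ⟨k, hk⟩) *
          ((fderiv ℝ f p v).2 ⟨0, by omega⟩ * c q ⟨k, hk⟩
            + (f p).2 ⟨0, by omega⟩ * (fderiv ℝ c q w) ⟨k, hk⟩)
      else if hk2 : k < n + m then
        (f p).2 ⟨2 * (k - m) + 1, by omega⟩ * (fderiv ℝ f p v).2 ⟨2 * (k - m), by omega⟩
      else 0 with hT
    set S : ℕ → ℝ := fun j =>
      if hj : j < n then
        (f p).2 ⟨2 * j + 1, by omega⟩ * (fderiv ℝ f p v).2 ⟨2 * j, by omega⟩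
      else 0 with hS
    have hsum : ∑ i : Fin (n + m),
        (F (p, q)).2 ⟨2 * (i : ℕ) + 1, by have := i.isLt; omega⟩ *
          (fderiv ℝ F (p, q) (v, w)).2 ⟨2 * (i : ℕ), by have := i.isLt; omega⟩
        = ∑ i : Fin n,
        (f p).2 ⟨2 * (i : ℕ) + 1, by have := i.isLt; omega⟩ *
          (fderiv ℝ f p v).2 ⟨2 * (i : ℕ), by have := i.isLt; omega⟩ := by
      have stepA : ∑ i : Fin (n + m),
          (F (p, q)).2 ⟨2 * (i : ℕ) + 1, by have := i.isLt; omega⟩ *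
            (fderiv ℝ F (p, q) (v, w)).2 ⟨2 * (i : ℕ), by have := i.isLt; omega⟩
          = ∑ i : Fin (n + m), T (i : ℕ) := by
        refine Finset.sum_congr rfl fun i _ => ?_
        by_cases hi : (i : ℕ) < m + 1
        · rw [hT]
          simp only [dif_pos hi]
          have e1 : (F (p, q)).2 ⟨2 * (i : ℕ) + 1, by have := i.isLt; omega⟩
              = (f p).2 ⟨1, by omega⟩ * c q ⟨(i : ℕ), hi⟩ :=
            congrFun (hco_odd (i : ℕ) hi (by have := i.isLt; omega)) (p, q)
          have e2 : (fderiv ℝ F (p, q) (v, w)).2 ⟨2 * (i : ℕ), by have := i.isLt; omega⟩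
              = (fderiv ℝ f p v).2 ⟨0, by omega⟩ * c q ⟨(i : ℕ), hi⟩
                + (f p).2 ⟨0, by omega⟩ * (fderiv ℝ c q w) ⟨(i : ℕ), hi⟩ := by
            rw [← fderiv_pi_comp' F hFd ⟨2 * (i : ℕ), by have := i.isLt; omega⟩ (v, w),
              hco_even (i : ℕ) hi (by have := i.isLt; omega),
              fderiv_mul_fst_snd _ _ (hfc _ p) (hcc _ q) v w,
              fderiv_pi_comp' f (hfd p) _ v, fderiv_projc' c (hcd q) _ w]
          rw [e1, e2]
        · rw [hT]
          simp only [dif_neg hi, dif_pos i.isLt]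
          have e1 : (F (p, q)).2 ⟨2 * (i : ℕ) + 1, by have := i.isLt; omega⟩
              = (f p).2 ⟨2 * ((i : ℕ) - m) + 1, by have := i.isLt; omega⟩ :=
            congrFun (hco_tail (2 * (i : ℕ) + 1) (2 * ((i : ℕ) - m) + 1) (by omega)
              (by have := i.isLt; omega) (by have := i.isLt; omega) (by omega)) (p, q)
          have e2 : (fderiv ℝ F (p, q) (v, w)).2 ⟨2 * (i : ℕ), by have := i.isLt; omega⟩
              = (fderiv ℝ f p v).2 ⟨2 * ((i : ℕ) - m), by have := i.isLt; omega⟩ := by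
            rw [← fderiv_pi_comp' F hFd ⟨2 * (i : ℕ), by have := i.isLt; omega⟩ (v, w),
              hco_tail (2 * (i : ℕ)) (2 * ((i : ℕ) - m)) (by omega)
                (by have := i.isLt; omega) (by have := i.isLt; omega) (by omega),
              fderiv_comp_fst_apply _ q (hfc _ p) v w,
              fderiv_pi_comp' f (hfd p) _ v]
          rw [e1, e2]
      have stepB : ∑ i : Fin n,
          (f p).2 ⟨2 * (i : ℕ) + 1, by have := i.isLt; omega⟩ *
            (fderiv ℝ f p v).2 ⟨2 * (i : ℕ), by have := i.isLt; omega⟩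
          = ∑ i : Fin n, S (i : ℕ) := by
        refine Finset.sum_congr rfl fun i _ => ?_
        rw [hS]
        simp only [dif_pos i.isLt]
      rw [stepA, stepB, Fin.sum_univ_eq_sum_range T (n + m), Fin.sum_univ_eq_sum_range S n]
      have hNM : n + m = (m + 1) + (n - 1) := by omega
      have hN : n = (n - 1) + 1 := by omega
      have hRHS : ∑ i ∈ Finset.range n, S i
          = (∑ i ∈ Finset.range (n - 1), S (i + 1)) + S 0 := by
        conv_lhs => rw [hN]
        exact Finset.sum_range_succ' S (n - 1)
      rw [hRHS, hNM, Finset.sum_range_add]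
      have hspun : ∑ k ∈ Finset.range (m + 1), T k
          = (f p).2 ⟨1, by omega⟩ * (fderiv ℝ f p v).2 ⟨0, by omega⟩ := by
        rw [← Fin.sum_univ_eq_sum_range T (m + 1)]
        have e1 : ∀ k : Fin (m + 1), T (k : ℕ)
            = ((f p).2 ⟨1, by omega⟩ * c q k) *
              ((fderiv ℝ f p v).2 ⟨0, by omega⟩ * c q k
                + (f p).2 ⟨0, by omega⟩ * (fderiv ℝ c q w) k) := by
          intro k
          rw [hT]
          simp only [dif_pos k.isLt, Fin.eta]
        rw [Finset.sum_congr rfl fun k _ => e1 k]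
        have expand : ∑ k : Fin (m + 1),
            ((f p).2 ⟨1, by omega⟩ * c q k) *
              ((fderiv ℝ f p v).2 ⟨0, by omega⟩ * c q k
                + (f p).2 ⟨0, by omega⟩ * (fderiv ℝ c q w) k)
            = (f p).2 ⟨1, by omega⟩ * (fderiv ℝ f p v).2 ⟨0, by omega⟩ *
                (∑ k : Fin (m + 1), (c q k) ^ 2)
              + (f p).2 ⟨1, by omega⟩ * (f p).2 ⟨0, by omega⟩ *
                (∑ k : Fin (m + 1), c q k * (fderiv ℝ c q w) k) := by
          rw [Finset.mul_sum, Finset.mul_sum, ← Finset.sum_add_distrib]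
          refine Finset.sum_congr rfl fun k _ => by ring
        rw [expand, hcsum q, cderiv_sum_zero c hcd hcsum q w]
        ring
      have htail : ∀ k ∈ Finset.range (n - 1), T ((m + 1) + k) = S (k + 1) := by
        intro k hk
        rw [Finset.mem_range] at hk
        simp only [hT, hS]
        rw [dif_neg (by omega : ¬ (m + 1) + k < m + 1),
          dif_pos (by omega : (m + 1) + k < n + m), dif_pos (by omega : k + 1 < n)]
        exact congrArg₂ (· * ·)
          (congrArg ((f p).2) (Fin.ext (show 2 * ((m + 1) + k - m) + 1 = 2 * (k + 1) + 1 by omega)))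
          (congrArg ((fderiv ℝ f p v).2) (Fin.ext (show 2 * ((m + 1) + k - m) = 2 * (k + 1) by omega)))
      have hS0 : S 0 = (f p).2 ⟨1, by omega⟩ * (fderiv ℝ f p v).2 ⟨0, by omega⟩ := by
        simp only [hS]
        rw [dif_pos (by omega : 0 < n)]
      rw [hspun, Finset.sum_congr rfl htail, hS0]
      ring
    have hFt : (F (p, q)).1 = (f p).1 := rfl
    rw [hDz, hsum, hFt]
  -- assemble
  by_cases hdh : DifferentiableAt ℝ h p
  · rw [key, ← hh p]
    exact fderiv_comp_fst' h q hdh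
  · have h0 : fderiv ℝ h p = 0 := fderiv_zero_of_not_differentiableAt hdh
    have hpull0 : pullbackOneForm f (symplPrimitive n) p = 0 := by rw [← hh p, h0]
    have hnd : ¬ DifferentiableAt ℝ (fun x : P × Q => h x.1) (p, q) := by
      intro hcon
      exact hdh (hcon.comp p (differentiableAt_id.prodMk (differentiableAt_const q) :
        DifferentiableAt ℝ (fun x : P => (x, q)) p) :)
    rw [key, hpull0, fderiv_zero_of_not_differentiableAt hnd,
      ContinuousLinearMap.zero_comp]
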